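/- arXiv:1602.07872 — 4 statements merged into one kernel-verified Lean document; each statement's English description precedes it below -/
import Mathlib

section
/- Let H be a real Hilbert space, let m ≥ 1 be an integer, let ω_1,…,ω_m ∈ [0,1] with ∑_{i=1}^m ω_i = 1, let C : H → H, and for each i ∈ {1,…,m} let G_i be a real Hilbert space, A_i : G_i → 2^{G_i} a set-valued operator, and L_i : H → G_i a bounded linear operator. Then for x ∈ H, the following are equivalent: (a) 0 ∈ ∑_{i=1}^m ω_i L_i* A_i(L_i x) + C x, i.e. there exist y_i ∈ A_i(L_i x) for i=1,…,m with ∑_{i=1}^m ω_i L_i* y_i + C x = 0; (b) the diagonal point (x,…,x) belongs to zer(𝐂 + 𝐋* 𝐀 𝐋 + N_𝐕), i.e. there exist u_i ∈ A_i(L_i x) and 𝐰 = (w_1,…,w_m) ∈ H^m with ∑_{i=1}^m ω_i w_i = 0 such that C x + L_i* u_i + w_i = 0 for every i. -/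
/-!
The equations `C x + Lᵢ* uᵢ + zᵢ = 0` force `zᵢ = -(C x + Lᵢ* uᵢ)`. Since the weights sum to one,
`∑ ωᵢ zᵢ = -(∑ ωᵢ Lᵢ* uᵢ + C x)`, so the constraint `∑ ωᵢ zᵢ = 0` is exactly the primal inclusion.
-/

theorem sum_smul_add_const_of_sum_eq_one {ι R M : Type*} [Fintype ι] [Semiring R]
    [AddCommMonoid M] [Module R M] {w : ι → R} (hw : ∑ i, w i = 1) (v : M) (a : ι → M) :
    ∑ i, w i • (v + a i) = v + ∑ i, w i • a i := by
  simp only [smul_add, Finset.sum_add_distrib, ← Finset.sum_smul, hw, one_smul]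

theorem exists_sum_smul_eq_zero_and_add_eq_zero_iff {ι R M : Type*} [Fintype ι] [Ring R]
    [AddCommGroup M] [Module R M] {w : ι → R} (hw : ∑ i, w i = 1) (v : M) (a : ι → M) :
    (∃ z : ι → M, ∑ i, w i • z i = 0 ∧ ∀ i, v + a i + z i = 0) ↔ ∑ i, w i • a i + v = 0 := by
  have hz : ∀ z : ι → M, (∀ i, v + a i + z i = 0) ↔ z = fun i => -(v + a i) := fun z => by
    simp only [funext_iff, add_eq_zero_iff_neg_eq, eq_comm]
  simp_rw [hz, exists_eq_right, smul_neg, Finset.sum_neg_distrib, neg_eq_zero,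
    sum_smul_add_const_of_sum_eq_one hw, add_comm v]

theorem product_space_primal_reformulation_general
    {H : Type*} [NormedAddCommGroup H] [InnerProductSpace ℝ H] [CompleteSpace H]
    (m : ℕ)
    (w : Fin m → ℝ) (hwsum : ∑ i, w i = 1)
    (C : H → H)
    (G : Fin m → Type*) [∀ i, NormedAddCommGroup (G i)] [∀ i, InnerProductSpace ℝ (G i)]
    [∀ i, CompleteSpace (G i)]
    (A : ∀ i, G i → Set (G i)) (L : ∀ i, H →L[ℝ] G i)
    (x : H) :
    (∃ y : ∀ i, G i, (∀ i, y i ∈ A i (L i x)) ∧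
        ∑ i, w i • (L i).adjoint (y i) + C x = 0) ↔
    (∃ (u : ∀ i, G i) (z : Fin m → H), (∀ i, u i ∈ A i (L i x)) ∧
        (∑ i, w i • z i = 0) ∧ ∀ i, C x + (L i).adjoint (u i) + z i = 0) := by
  simp only [exists_and_left, exists_sum_smul_eq_zero_and_add_eq_zero_iff hwsum]

/-- Product-space reformulation of the composite primal inclusion:
`0 ∈ ∑ᵢ ωᵢ Lᵢ* Aᵢ(Lᵢ x) + C x` holds iff the diagonal point `(x,…,x)` is a zero of
`𝐂 + 𝐋* 𝐀 𝐋 + N_𝐕`, where `𝐕` is the diagonal subspace of `H^m` with the weighted inner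
product (whose orthogonal complement is `{𝐰 : ∑ᵢ ωᵢ wᵢ = 0}`). -/
theorem product_space_primal_reformulation
    {H : Type*} [NormedAddCommGroup H] [InnerProductSpace ℝ H] [CompleteSpace H]
    (m : ℕ) (hm : 1 ≤ m)
    (w : Fin m → ℝ) (hw : ∀ i, w i ∈ Set.Icc (0 : ℝ) 1) (hwsum : ∑ i, w i = 1)
    (C : H → H)
    (G : Fin m → Type*) [∀ i, NormedAddCommGroup (G i)] [∀ i, InnerProductSpace ℝ (G i)]
    [∀ i, CompleteSpace (G i)]
    (A : ∀ i, G i → Set (G i)) (L : ∀ i, H →L[ℝ] G i)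
    (x : H) :
    (∃ y : ∀ i, G i, (∀ i, y i ∈ A i (L i x)) ∧
        ∑ i, w i • (L i).adjoint (y i) + C x = 0) ↔
    (∃ (u : ∀ i, G i) (z : Fin m → H), (∀ i, u i ∈ A i (L i x)) ∧
        (∑ i, w i • z i = 0) ∧ ∀ i, C x + (L i).adjoint (u i) + z i = 0) :=
  product_space_primal_reformulation_general m w hwsum C G A L x
end

section
/- Let H and G be real Hilbert spaces, let h : H → ℝ be convex differentiable, let g ∈ Γ_0(G), let L : H → G be bounded linear, let V be a closed vector subspace of H with orthogonal projection P_V, and let K(x,v) = h(x) + ι_V(x) + ⟨Lx,v⟩ − g*(v). Let γ, τ > 0, let U be a self-adjoint positive definite bounded operator on G, and set R = (τU)^{-1} − L P_V L*. Let p ∈ V, v_old ∈ G, and let v₊ = prox^{U^{-1}}_{(τ/γ) g*}(v_old + (τ/γ) U L p), i.e. the unique minimizer of w ↦ (τ/γ) g*(w) + (1/2)⟨U^{-1}(v_old + (τ/γ)ULp − w), v_old + (τ/γ)ULp − w⟩. Let x₊ ∈ V satisfy x₊ − p = γ P_V L*(v_old − v₊). Then for every v ∈ dom g*, γ (K(x₊,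 v) − K(x₊, v₊)) ≤ (γ²/2)(⟨R(v_old − v), v_old − v⟩ − ⟨R(v₊ − v), v₊ − v⟩ − ⟨R(v₊ − v_old), v₊ − v_old⟩). -/
open scoped RealInnerProductSpace

/-- The orthogonal projection of `H` onto the closed subspace `V`, as a map `H →L[ℝ] H`. -/
noncomputable def projV {H : Type*} [NormedAddCommGroup H] [InnerProductSpace ℝ H]
    (V : Submodule ℝ H) [V.HasOrthogonalProjection] : H →L[ℝ] H :=
  V.subtypeL.comp (V.orthogonalProjectionOnto)

/-- Fenchel conjugate of an `EReal`-valued function on a real inner product space. -/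
noncomputable def fconj {G : Type*} [NormedAddCommGroup G] [InnerProductSpace ℝ G]
    (g : G → EReal) (v : G) : EReal :=
  ⨆ y : G, ((⟪v, y⟫ : ℝ) : EReal) - g y

open Classical in
/-- The saddle function `K(x,v) = h(x) + ι_V(x) + ⟨Lx, v⟩ − g*(v)` (with values in `EReal`). -/
noncomputable def saddleK {H G : Type*} [NormedAddCommGroup H] [InnerProductSpace ℝ H]
    [NormedAddCommGroup G] [InnerProductSpace ℝ G]
    (h : H → ℝ) (g : G → EReal) (L : H →L[ℝ] G) (V : Submodule ℝ H)
    (x : H) (v : G) : EReal :=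
  ((h x : ℝ) : EReal) + (if x ∈ V then (0 : EReal) else ⊤)
    + ((⟪L x, v⟫ : ℝ) : EReal) - fconj g v

/-! Minimality of `v₊` for the proximal objective, tested along the segment from `v₊` to `v`
where `g*` is convex, yields the variational inequality
`⟪U⁻¹(v_old + (τ/γ) U L p − v₊), v − v₊⟫ ≤ (τ/γ)(g*(v) − g*(v₊))`.
Substituting the primal step `x₊ = p + γ P_V L*(v_old − v₊)` bounds the left-hand side of the
claim by `γ² ⟪R(v_old − v₊), v₊ − v⟫`, and for the symmetric operator `R` the three-point
identity `⟪Ra, a⟫ − ⟪Rb, b⟫ − ⟪R(b − a), b − a⟫ = 2⟪R(a − b), b⟫` identifies this with the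
right-hand side. -/

open Set Filter Topology

section FenchelConjugate

variable {G : Type*} [NormedAddCommGroup G] [InnerProductSpace ℝ G] {g : G → EReal}

theorem inner_sub_le_fconj (g : G → EReal) (v y : G) :
    ((⟪v, y⟫ : ℝ) : EReal) - g y ≤ fconj g v :=
  le_iSup (fun y => ((⟪v, y⟫ : ℝ) : EReal) - g y) y

theorem fconj_ne_bot (hg : ∃ y, g y ≠ ⊤) (v : G) : fconj g v ≠ ⊥ := by
  obtain ⟨y, hy⟩ := hg
  refine ne_bot_of_le_ne_bot ?_ (inner_sub_le_fconj g v y)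
  generalize g y = s at hy ⊢
  induction s using EReal.rec <;> simp_all [← EReal.coe_sub]

theorem fconj_smul_add_smul_le {u w : G} {A B a b : ℝ} (hu : fconj g u ≤ A) (hw : fconj g w ≤ B)
    (ha : 0 ≤ a) (hb : 0 ≤ b) (hab : a + b = 1) :
    fconj g (a • u + b • w) ≤ ((a * A + b * B : ℝ) : EReal) := by
  refine iSup_le fun y => ?_
  have hu' := (inner_sub_le_fconj g u y).trans hu
  have hw' := (inner_sub_le_fconj g w y).trans hw
  generalize g y = s at hu' hw' ⊢
  induction s using EReal.rec with
  | bot => simp at hu'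
  | top => simp
  | coe s =>
    norm_cast at hu' hw' ⊢
    have hs : s = a * s + b * s := by rw [← add_mul, hab, one_mul]
    rw [inner_add_left, real_inner_smul_left, real_inner_smul_left]
    linarith [mul_le_mul_of_nonneg_left hu' ha, mul_le_mul_of_nonneg_left hw' hb]

end FenchelConjugate

theorem LinearMap.IsSymmetric.of_rightInverse {𝕜 E : Type*} [RCLike 𝕜] [NormedAddCommGroup E]
    [InnerProductSpace 𝕜 E] {U T : E →ₗ[𝕜] E} (hU : U.IsSymmetric)
    (h : Function.RightInverse T U) : T.IsSymmetric := fun a b =>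
  calc inner 𝕜 (T a) b = inner 𝕜 (T a) (U (T b)) := by rw [h b]
    _ = inner 𝕜 (U (T a)) (T b) := (hU _ _).symm
    _ = inner 𝕜 a (T b) := by rw [h a]

section Symmetric

variable {G : Type*} [NormedAddCommGroup G] [InnerProductSpace ℝ G]

theorem LinearMap.IsSymmetric.inner_map_sub_smul_self {T : G →ₗ[ℝ] G} (hT : T.IsSymmetric)
    (x d : G) (t : ℝ) :
    ⟪T (x - t • d), x - t • d⟫ = ⟪T x, x⟫ - 2 * t * ⟪T x, d⟫ + t ^ 2 * ⟪T d, d⟫ := by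
  have hdx : ⟪T d, x⟫ = ⟪T x, d⟫ := by rw [hT, real_inner_comm]
  simp only [map_sub, map_smul, inner_sub_left, inner_sub_right, real_inner_smul_left,
    real_inner_smul_right, hdx]
  ring

theorem LinearMap.IsSymmetric.inner_three_point {T : G →ₗ[ℝ] G} (hT : T.IsSymmetric)
    (x y z : G) :
    ⟪T (x - z), x - z⟫ - ⟪T (y - z), y - z⟫ - ⟪T (y - x), y - x⟫ = 2 * ⟪T (x - y), y - z⟫ := by
  have hxy : ⟪T y, x⟫ = ⟪T x, y⟫ := by rw [hT, real_inner_comm]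
  have hxz : ⟪T z, x⟫ = ⟪T x, z⟫ := by rw [hT, real_inner_comm]
  have hyz : ⟪T z, y⟫ = ⟪T y, z⟫ := by rw [hT, real_inner_comm]
  simp only [map_sub, inner_sub_left, inner_sub_right, hxy, hxz, hyz]
  ring

end Symmetric

section Prox

variable {G : Type*} [NormedAddCommGroup G] [InnerProductSpace ℝ G]

noncomputable def proxObjective (f : G → EReal) (T : G →ₗ[ℝ] G) (c : ℝ) (E w : G) : EReal :=
  (c : EReal) * f w + ((1 / 2 * ⟪T (E - w), E - w⟫ : ℝ) : EReal)

variable {f : G → EReal} {T : G →ₗ[ℝ] G} {c : ℝ} {E w₀ : G}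

theorem ne_top_of_forall_proxObjective_le (hc : 0 < c)
    (hmin : ∀ z, proxObjective f T c E w₀ ≤ proxObjective f T c E z) {v : G} (hv : f v ≠ ⊤) :
    f w₀ ≠ ⊤ := by
  intro htop
  have hle := hmin v
  simp only [proxObjective, htop, EReal.coe_mul_top_of_pos hc, EReal.top_add_coe, top_le_iff] at hle
  generalize f v = s at hv hle
  induction s using EReal.rec with
  | bot => simp [EReal.coe_mul_bot_of_pos hc] at hle
  | top => exact hv rfl
  | coe s => exact EReal.coe_ne_top _ (by exact_mod_cast hle)

theorem inner_le_of_forall_proxObjective_le (hT : T.IsSymmetric) (hc : 0 < c)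
    (hmin : ∀ z, proxObjective f T c E w₀ ≤ proxObjective f T c E z) {v : G} {A B : ℝ}
    (hA : f w₀ = A)
    (hconv : ∀ t ∈ Icc (0 : ℝ) 1, f (w₀ + t • (v - w₀)) ≤ (((1 - t) * A + t * B : ℝ) : EReal)) :
    ⟪T (E - w₀), v - w₀⟫ ≤ c * (B - A) := by
  set C := ⟪T (v - w₀), v - w₀⟫ / 2 with hC
  -- first-order optimality: compare with `w₀ + t • (v - w₀)`, divide by `t`, let `t → 0⁺`
  have key : ∀ t ∈ Ioc (0 : ℝ) 1, ⟪T (E - w₀), v - w₀⟫ ≤ c * (B - A) + t * C := by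
    rintro t ⟨ht0, ht1⟩
    have h1 := (hmin (w₀ + t • (v - w₀))).trans (add_le_add_left
      (mul_le_mul_of_nonneg_left (hconv t ⟨ht0.le, ht1⟩) (EReal.coe_nonneg.2 hc.le)) _)
    have hE : E - (w₀ + t • (v - w₀)) = (E - w₀) - t • (v - w₀) := by abel
    rw [proxObjective, hA, hE, hT.inner_map_sub_smul_self] at h1
    norm_cast at h1
    refine le_of_mul_le_mul_left ?_ ht0
    rw [hC]
    linear_combination h1
  have hlim : Tendsto (fun t : ℝ => c * (B - A) + t * C) (𝓝[>] 0) (𝓝 (c * (B - A))) := by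
    refine tendsto_nhdsWithin_of_tendsto_nhds ?_
    exact (by fun_prop : Continuous fun t : ℝ => c * (B - A) + t * C).tendsto' 0 _ (by simp)
  exact ge_of_tendsto hlim (eventually_of_mem (Ioc_mem_nhdsGT zero_lt_one) key)

end Prox

section SaddleFunction

variable {H G : Type*} [NormedAddCommGroup H] [InnerProductSpace ℝ H]
  [NormedAddCommGroup G] [InnerProductSpace ℝ G]

theorem saddleK_of_mem (h : H → ℝ) (g : G → EReal) (L : H →L[ℝ] G) {V : Submodule ℝ H}
    {x : H} (hx : x ∈ V) {v : G} {B : ℝ} (hB : fconj g v = B) :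
    saddleK h g L V x v = ((h x + ⟪L x, v⟫ - B : ℝ) : EReal) := by
  rw [saddleK, if_pos hx, add_zero, hB]
  norm_cast

variable [CompleteSpace H] [CompleteSpace G]

/-- The operator `R = (τU)⁻¹ − L P_V L*`, with `Uinv` in the role of `U⁻¹`. -/
noncomputable def dualMetric (τ : ℝ) (Uinv : G →L[ℝ] G) (L : H →L[ℝ] G) (V : Submodule ℝ H)
    [V.HasOrthogonalProjection] : G →ₗ[ℝ] G :=
  τ⁻¹ • (Uinv : G →ₗ[ℝ] G) - ((L ∘L projV V ∘L L.adjoint : G →L[ℝ] G) : G →ₗ[ℝ] G)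

variable {τ : ℝ} {Uinv : G →L[ℝ] G} {L : H →L[ℝ] G} {V : Submodule ℝ H}
  [V.HasOrthogonalProjection]

theorem dualMetric_apply (z : G) :
    dualMetric τ Uinv L V z = τ⁻¹ • Uinv z - L (projV V (L.adjoint z)) := rfl

theorem isSymmetric_dualMetric (hUinv : (Uinv : G →ₗ[ℝ] G).IsSymmetric) :
    (dualMetric τ Uinv L V).IsSymmetric :=
  (hUinv.smul (by simp)).sub ((isSelfAdjoint_starProjection V).conj_adjoint L).isSymmetric

theorem inner_sub_le_dualMetric {U : G →L[ℝ] G} (hUinvU : ∀ z, Uinv (U z) = z) {γ : ℝ}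
    (hγ : 0 < γ) (hτ : 0 < τ) {p xplus : H} {vold vplus v : G} {A B : ℝ}
    (hxplus : xplus - p = γ • projV V (L.adjoint (vold - vplus)))
    (hprox : ⟪Uinv (vold + (τ / γ) • U (L p) - vplus), v - vplus⟫ ≤ τ / γ * (B - A)) :
    γ * (⟪L xplus, v - vplus⟫ - (B - A))
      ≤ γ ^ 2 * ⟪dualMetric τ Uinv L V (vold - vplus), vplus - v⟫ := by
  rw [sub_eq_iff_eq_add'] at hxplus
  rw [show vold + (τ / γ) • U (L p) - vplus = (vold - vplus) + (τ / γ) • U (L p) by abel] at hprox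
  simp only [dualMetric_apply, hxplus, map_add, map_smul, hUinvU, inner_add_left, inner_sub_left,
    inner_sub_right, real_inner_smul_left] at hprox ⊢
  have hγτ : γ ^ 2 / τ * (τ / γ) = γ := by field_simp
  linear_combination (γ ^ 2 / τ) * hprox - (⟪L p, v⟫ - ⟪L p, vplus⟫ - (B - A)) * hγτ

end SaddleFunction

theorem saddle_dual_ascent_general
    {H G : Type*} [NormedAddCommGroup H] [InnerProductSpace ℝ H] [CompleteSpace H]
    [NormedAddCommGroup G] [InnerProductSpace ℝ G] [CompleteSpace G]
    (h : H → ℝ)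
    (g : G → EReal)
    (hg_proper : ∃ y : G, g y ≠ ⊤)
    (L : H →L[ℝ] G) (V : Submodule ℝ H) [V.HasOrthogonalProjection]
    (γ τ : ℝ) (hγ : 0 < γ) (hτ : 0 < τ)
    (U Uinv : G →L[ℝ] G) (hUsa : IsSelfAdjoint U)
    (hUinvU : ∀ z : G, U (Uinv z) = z ∧ Uinv (U z) = z)
    (R : G → G) (hR : ∀ z : G, R z = τ⁻¹ • Uinv z - L (projV V (L.adjoint z)))
    (p : H) (vold : G) (vplus : G)
    (hvplus : ∀ z : G,
      ((τ / γ : ℝ) : EReal) * fconj g vplus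
          + ((1 / 2 * ⟪Uinv (vold + (τ / γ) • U (L p) - vplus),
                vold + (τ / γ) • U (L p) - vplus⟫ : ℝ) : EReal)
        ≤ ((τ / γ : ℝ) : EReal) * fconj g z
          + ((1 / 2 * ⟪Uinv (vold + (τ / γ) • U (L p) - z),
                vold + (τ / γ) • U (L p) - z⟫ : ℝ) : EReal))
    (xplus : H) (hxplusV : xplus ∈ V)
    (hxplus : xplus - p = γ • projV V (L.adjoint (vold - vplus))) :
    ∀ v : G, fconj g v ≠ ⊤ →
      ((γ : ℝ) : EReal) * (saddleK h g L V xplus v - saddleK h g L V xplus vplus)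
        ≤ ((γ ^ 2 / 2 * (⟪R (vold - v), vold - v⟫ - ⟪R (vplus - v), vplus - v⟫
              - ⟪R (vplus - vold), vplus - vold⟫) : ℝ) : EReal) := by
  intro v hv
  have hc : 0 < τ / γ := div_pos hτ hγ
  have hUinv : (Uinv : G →ₗ[ℝ] G).IsSymmetric :=
    hUsa.isSymmetric.of_rightInverse fun z => (hUinvU z).1
  have hmin : ∀ z, proxObjective (fconj g) Uinv (τ / γ) (vold + (τ / γ) • U (L p)) vplus
      ≤ proxObjective (fconj g) Uinv (τ / γ) (vold + (τ / γ) • U (L p)) z := hvplus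
  obtain ⟨B, hB⟩ : ∃ B : ℝ, fconj g v = B :=
    ⟨_, (EReal.coe_toReal hv (fconj_ne_bot hg_proper v)).symm⟩
  obtain ⟨A, hA⟩ : ∃ A : ℝ, fconj g vplus = A :=
    ⟨_, (EReal.coe_toReal (ne_top_of_forall_proxObjective_le hc hmin hv)
      (fconj_ne_bot hg_proper vplus)).symm⟩
  have hprox := inner_le_of_forall_proxObjective_le hUinv hc hmin hA fun t ⟨ht0, ht1⟩ => by
    rw [show vplus + t • (v - vplus) = (1 - t) • vplus + t • v by module]
    exact fconj_smul_add_smul_le hA.le hB.le (sub_nonneg.2 ht1) ht0 (sub_add_cancel 1 t)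
  have hstep := inner_sub_le_dualMetric (fun z => (hUinvU z).2) hγ hτ hxplus hprox
  obtain rfl : R = dualMetric τ Uinv L V := funext hR
  rw [saddleK_of_mem h g L hxplusV hB, saddleK_of_mem h g L hxplusV hA,
    (isSymmetric_dualMetric hUinv).inner_three_point]
  norm_cast
  rw [inner_sub_right] at hstep
  linarith

/-- Dual ascent inequality for the saddle function: with
`R = (τU)⁻¹ − L P_V L*`, `v₊ = prox^{U⁻¹}_{(τ/γ)g*}(v_old + (τ/γ)U L p)` and `x₊ ∈ V` with
`x₊ − p = γ P_V L*(v_old − v₊)`, every `v ∈ dom g*` satisfies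
`γ(K(x₊,v) − K(x₊,v₊)) ≤ (γ²/2)(⟨R(v_old−v),v_old−v⟩ − ⟨R(v₊−v),v₊−v⟩ − ⟨R(v₊−v_old),v₊−v_old⟩)`. -/
theorem saddle_dual_ascent
    {H G : Type*} [NormedAddCommGroup H] [InnerProductSpace ℝ H] [CompleteSpace H]
    [NormedAddCommGroup G] [InnerProductSpace ℝ G] [CompleteSpace G]
    (h : H → ℝ) (hconv : ConvexOn ℝ Set.univ h) (hdiff : Differentiable ℝ h)
    (g : G → EReal)
    (hg_ne_bot : ∀ y : G, g y ≠ ⊥) (hg_proper : ∃ y : G, g y ≠ ⊤)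
    (hg_convex : ∀ y z : G, ∀ a b : ℝ, 0 ≤ a → 0 ≤ b → a + b = 1 →
      g (a • y + b • z) ≤ (a : EReal) * g y + (b : EReal) * g z)
    (hg_lsc : LowerSemicontinuous g)
    (L : H →L[ℝ] G) (V : Submodule ℝ H) [V.HasOrthogonalProjection]
    (γ τ : ℝ) (hγ : 0 < γ) (hτ : 0 < τ)
    (U Uinv : G →L[ℝ] G) (hUsa : IsSelfAdjoint U)
    (hUpos : ∀ z : G, z ≠ 0 → 0 < ⟪U z, z⟫)
    (hUinvU : ∀ z : G, U (Uinv z) = z ∧ Uinv (U z) = z)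
    (R : G → G) (hR : ∀ z : G, R z = τ⁻¹ • Uinv z - L (projV V (L.adjoint z)))
    (p : H) (hpV : p ∈ V) (vold : G) (vplus : G)
    (hvplus : ∀ z : G,
      ((τ / γ : ℝ) : EReal) * fconj g vplus
          + ((1 / 2 * ⟪Uinv (vold + (τ / γ) • U (L p) - vplus),
                vold + (τ / γ) • U (L p) - vplus⟫ : ℝ) : EReal)
        ≤ ((τ / γ : ℝ) : EReal) * fconj g z
          + ((1 / 2 * ⟪Uinv (vold + (τ / γ) • U (L p) - z),
                vold + (τ / γ) • U (L p) - z⟫ : ℝ) : EReal))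
    (xplus : H) (hxplusV : xplus ∈ V)
    (hxplus : xplus - p = γ • projV V (L.adjoint (vold - vplus))) :
    ∀ v : G, fconj g v ≠ ⊤ →
      ((γ : ℝ) : EReal) * (saddleK h g L V xplus v - saddleK h g L V xplus vplus)
        ≤ ((γ ^ 2 / 2 * (⟪R (vold - v), vold - v⟫ - ⟪R (vplus - v), vplus - v⟫
              - ⟪R (vplus - vold), vplus - vold⟫) : ℝ) : EReal) :=
  saddle_dual_ascent_general h g hg_proper L V γ τ hγ hτ U Uinv hUsa hUinvU R hR p vold vplus hvplus
    xplus hxplusV hxplus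
end

section
/- Let H and G be real Hilbert spaces, let β > 0, let B : H → H be β-cocoercive, let L : H → G be bounded linear, let V be a closed vector subspace of H with orthogonal projection P_V, and let γ > 0. Let x̄ ∈ V and v̄ ∈ G satisfy −P_V L* v̄ = P_V B x̄. Let x_n ∈ H, v₊ ∈ G, and set x₊ = P_V(x_n − γ(L* v₊ + B x_n)). Then 2⟨P_V L*(v₊ − v̄), x₊ − x̄⟩ ≤ (1/γ)(‖x_n − x̄‖² − ‖x₊ − x̄‖²) − (1/γ − 1/β)‖x_n − x₊‖² − β ‖B x_n − B x̄‖². -/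
/-!
Write `w = x₊ - x̄ ∈ V` and `d = xₙ - x₊`. Testing the projection step and the optimality
condition against `w` turns the left-hand side into `2⟨d, w⟩ / γ - 2⟨Bxₙ - Bx̄, w⟩`. The first
term is `(‖xₙ - x̄‖² - ‖w‖² - ‖d‖²) / γ` by expanding `xₙ - x̄ = d + w`; the second is bounded by
cocoercivity applied to `xₙ - x̄ = w + d` together with Young's inequality on `⟨Bxₙ - Bx̄, d⟩`.
-/

open scoped RealInnerProductSpace

section InnerProductSpace

variable {E : Type*} [NormedAddCommGroup E] [InnerProductSpace ℝ E]

lemma projV_eq_starProjection (V : Submodule ℝ E) [V.HasOrthogonalProjection] :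
    projV V = V.starProjection :=
  rfl

lemma projV_mem (V : Submodule ℝ E) [V.HasOrthogonalProjection] (u : E) : projV V u ∈ V :=
  V.starProjection_apply_mem u

lemma inner_projV_left_of_mem {V : Submodule ℝ E} [V.HasOrthogonalProjection] (u : E) {w : E}
    (hw : w ∈ V) : ⟪projV V u, w⟫ = ⟪u, w⟫ := by
  rw [projV_eq_starProjection, Submodule.inner_starProjection_left_eq_right,
    (Submodule.starProjection_eq_self_iff).2 hw]

lemma inner_sub_projV_smul_of_mem {V : Submodule ℝ E} [V.HasOrthogonalProjection]
    (x g : E) (γ : ℝ) {w : E} (hw : w ∈ V) :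
    ⟪x - projV V (x - γ • g), w⟫ = γ * ⟪g, w⟫ := by
  rw [inner_sub_left, inner_projV_left_of_mem _ hw, inner_sub_left, real_inner_smul_left]
  ring

lemma two_mul_inner_le_mul_norm_sq_add {β : ℝ} (hβ : 0 < β) (b d : E) :
    2 * ⟪b, d⟫ ≤ β * ‖b‖ ^ 2 + ‖d‖ ^ 2 / β := by
  have hsq : ‖β • b - d‖ ^ 2 / β = β * ‖b‖ ^ 2 + ‖d‖ ^ 2 / β - 2 * ⟪b, d⟫ := by
    rw [norm_sub_sq_real, norm_smul, real_inner_smul_left, Real.norm_of_nonneg hβ.le]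
    field_simp
    ring
  linarith [show 0 ≤ ‖β • b - d‖ ^ 2 / β by positivity]

lemma neg_two_inner_sub_le_of_mul_norm_sq_le_inner {β : ℝ} (hβ : 0 < β) {b u : E}
    (hbu : β * ‖b‖ ^ 2 ≤ ⟪b, u⟫) (d : E) :
    -(2 * ⟪b, u - d⟫) ≤ ‖d‖ ^ 2 / β - β * ‖b‖ ^ 2 := by
  rw [inner_sub_right]
  linarith [two_mul_inner_le_mul_norm_sq_add hβ b d]

end InnerProductSpace

/-- One-step primal descent estimate for a `β`-cocoercive operator `B`:
if `x̄ ∈ V`, `−P_V L* v̄ = P_V B x̄`, and `x₊ = P_V(xₙ − γ(L* v₊ + B xₙ))`, then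
`2⟨P_V L*(v₊ − v̄), x₊ − x̄⟩ ≤ (1/γ)(‖xₙ−x̄‖² − ‖x₊−x̄‖²) − (1/γ − 1/β)‖xₙ−x₊‖² − β‖Bxₙ−Bx̄‖²`. -/
theorem primal_step_estimate
    {H G : Type*} [NormedAddCommGroup H] [InnerProductSpace ℝ H] [CompleteSpace H]
    [NormedAddCommGroup G] [InnerProductSpace ℝ G] [CompleteSpace G]
    (β : ℝ) (hβ : 0 < β)
    (B : H → H) (hB : ∀ x y : H, β * ‖B x - B y‖ ^ 2 ≤ ⟪B x - B y, x - y⟫)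
    (L : H →L[ℝ] G)
    (V : Submodule ℝ H) [V.HasOrthogonalProjection]
    (γ : ℝ) (hγ : 0 < γ)
    (xbar : H) (hxbar : xbar ∈ V) (vbar : G)
    (hopt : -(projV V (L.adjoint vbar)) = projV V (B xbar))
    (xn : H) (vplus : G) (xplus : H)
    (hxplus : xplus = projV V (xn - γ • (L.adjoint vplus + B xn))) :
    2 * ⟪projV V (L.adjoint (vplus - vbar)), xplus - xbar⟫
      ≤ (1 / γ) * (‖xn - xbar‖ ^ 2 - ‖xplus - xbar‖ ^ 2)
        - (1 / γ - 1 / β) * ‖xn - xplus‖ ^ 2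
        - β * ‖B xn - B xbar‖ ^ 2 := by
  have hw : xplus - xbar ∈ V := V.sub_mem (hxplus ▸ projV_mem V _) hxbar
  have hstep : ⟪xn - xplus, xplus - xbar⟫ = γ * ⟪L.adjoint vplus + B xn, xplus - xbar⟫ := by
    subst hxplus; exact inner_sub_projV_smul_of_mem _ _ _ hw
  have hopt_w : ⟪L.adjoint vbar + B xbar, xplus - xbar⟫ = 0 := by
    have h := congrArg (⟪·, xplus - xbar⟫) hopt
    simp only [inner_neg_left, inner_projV_left_of_mem _ hw] at h
    rw [inner_add_left]; linarith
  have hsplit : ‖xn - xbar‖ ^ 2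
      = ‖xn - xplus‖ ^ 2 + 2 * ⟪xn - xplus, xplus - xbar⟫ + ‖xplus - xbar‖ ^ 2 := by
    rw [← norm_add_sq_real, sub_add_sub_cancel]
  have hcoco := neg_two_inner_sub_le_of_mul_norm_sq_le_inner hβ (hB xn xbar) (xn - xplus)
  rw [sub_sub_sub_cancel_left] at hcoco
  have hscale : ∀ a : ℝ, (1 / γ) * (‖xn - xplus‖ ^ 2 + 2 * (γ * a) + ‖xplus - xbar‖ ^ 2
      - ‖xplus - xbar‖ ^ 2) - (1 / γ - 1 / β) * ‖xn - xplus‖ ^ 2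
      = 2 * a + ‖xn - xplus‖ ^ 2 / β := by
    intro a; field_simp; ring
  rw [inner_projV_left_of_mem _ hw, map_sub, hsplit, hstep, hscale]
  simp only [inner_add_left, inner_sub_left] at hopt_w hcoco ⊢
  linarith
end

section
/- Let H be a real Hilbert space, m ≥ 1, ω_1,…,ω_m ∈ [0,1] with ∑_{i=1}^m ω_i = 1, let C : H → H, and for each i let G_i be a real Hilbert space, A_i : G_i → 2^{G_i} a set-valued operator, and L_i : H → G_i bounded linear. Define on 𝓗 = H^m with the weighted inner product the diagonal subspace 𝐕 with normal cone N_𝐕, and the operators 𝐂, 𝐋, 𝐋*, 𝐀 componentwise as in the product-space reformulation. Then for 𝐯 = (v_1,…,v_m) ∈ G_1 × ⋯ × G_m, the inclusion 0 ∈ −𝐋 (N_𝐕 + 𝐂)^{-1}(−𝐋* 𝐯) + 𝐀^{-1} 𝐯 holds if and only if there exists x ∈ H such that −∑_{i=1}^m ω_i L_i* v_i = C x and v_i ∈ A_i(L_i x) for every i ∈ {1,…,m}, i.e. if and only if 𝐯 belongs to the dual solution set 𝓓_1 of the composite inclusion problem. -/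
open scoped RealInnerProductSpace BigOperators

/-!
A point of the diagonal `𝐕` is a constant family `(x, …, x)`. For such a point, a family `z` with
`zᵢ = -Lᵢ* vᵢ - C x` lies in `𝐕^⊥` exactly when its weighted average vanishes, and since the
weights sum to `1` that average is `-∑ᵢ ωᵢ Lᵢ* vᵢ - C x`.
-/

theorem exists_forall_eq_and_iff {ι α : Type*} [Nonempty ι] {P : (ι → α) → Prop} :
    (∃ x : ι → α, (∀ i j, x i = x j) ∧ P x) ↔ ∃ a, P fun _ => a := by
  constructor
  · rintro ⟨x, hx, hP⟩
    obtain ⟨i₀⟩ := ‹Nonempty ι›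
    exact ⟨x i₀, by rwa [show (fun _ => x i₀) = x from funext fun i => hx i₀ i]⟩
  · rintro ⟨a, hP⟩
    exact ⟨fun _ => a, fun _ _ => rfl, hP⟩

theorem Finset.sum_smul_add_const {ι R M : Type*} [Semiring R] [AddCommMonoid M] [Module R M]
    {s : Finset ι} {w : ι → R} (hw : ∑ i ∈ s, w i = 1) (z : ι → M) (c : M) :
    ∑ i ∈ s, w i • (z i + c) = ∑ i ∈ s, w i • z i + c := by
  simp only [smul_add, Finset.sum_add_distrib, ← Finset.sum_smul, hw, one_smul]

theorem exists_sum_smul_eq_zero_and_eq_add_iff {ι R M : Type*} [Ring R] [AddCommGroup M]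
    [Module R M] {s : Finset ι} {w : ι → R} (hw : ∑ i ∈ s, w i = 1) (a : ι → M) (c : M) :
    (∃ z : ι → M, ∑ i ∈ s, w i • z i = 0 ∧ ∀ i, a i = z i + c) ↔ ∑ i ∈ s, w i • a i = c := by
  constructor
  · rintro ⟨z, hz, ha⟩
    simp only [ha, Finset.sum_smul_add_const hw, hz, zero_add]
  · intro ha
    refine ⟨fun i => a i - c, ?_, fun i => (sub_add_cancel _ _).symm⟩
    have hsum := Finset.sum_smul_add_const hw (fun i => a i - c) c
    simp only [sub_add_cancel, ha] at hsum
    exact add_eq_right.mp hsum.symm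

theorem product_space_dual_reformulation_general
    {H : Type*} [NormedAddCommGroup H] [InnerProductSpace ℝ H] [CompleteSpace H]
    (m : ℕ) (hm : 1 ≤ m)
    (w : Fin m → ℝ) (hwsum : ∑ i, w i = 1)
    (C : H → H)
    (G : Fin m → Type*) [∀ i, NormedAddCommGroup (G i)] [∀ i, InnerProductSpace ℝ (G i)]
    [∀ i, CompleteSpace (G i)]
    (A : ∀ i, G i → Set (G i)) (L : ∀ i, H →L[ℝ] G i)
    (v : ∀ i, G i) :
    (∃ (x : Fin m → H) (z : Fin m → H),
        (∀ i j, x i = x j) ∧                             -- 𝐱 ∈ 𝐕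
        (∑ i, w i • z i = 0) ∧                           -- 𝐰 ∈ 𝐕^⊥, so −𝐋*𝐯 ∈ N_𝐕𝐱 + 𝐂𝐱
        (∀ i, -((L i).adjoint (v i)) = z i + C (x i)) ∧
        (∀ i, v i ∈ A i (L i (x i)))) ↔                  -- 𝐋𝐱 ∈ 𝐀⁻¹𝐯
    (∃ x : H, -(∑ i, w i • (L i).adjoint (v i)) = C x ∧ ∀ i, v i ∈ A i (L i x)) := by
  have : Nonempty (Fin m) := ⟨⟨0, hm⟩⟩
  simp only [exists_and_left, exists_forall_eq_and_iff]
  refine exists_congr fun x => ?_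
  simp only [← Finset.sum_neg_distrib, ← smul_neg]
  rw [← exists_sum_smul_eq_zero_and_eq_add_iff hwsum]
  simp only [← and_assoc, exists_and_right]

/-- Product-space reformulation of the dual inclusion: with `𝐕` the diagonal
subspace of `H^m` (weighted inner product `⟨𝐱,𝐲⟩ = ∑ᵢ ωᵢ⟨xᵢ,yᵢ⟩`, so `𝐕^⊥ = {𝐰 : ∑ᵢ ωᵢ wᵢ = 0}`
and `N_𝐕 𝐱 = 𝐕^⊥` for `𝐱 ∈ 𝐕`), the inclusion `0 ∈ −𝐋 (N_𝐕 + 𝐂)⁻¹(−𝐋* 𝐯) + 𝐀⁻¹ 𝐯`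
(i.e. there is `𝐱` with `−𝐋*𝐯 ∈ N_𝐕 𝐱 + 𝐂 𝐱` and `𝐋 𝐱 ∈ 𝐀⁻¹ 𝐯`) holds iff there exists
`x ∈ H` with `−∑ᵢ ωᵢ Lᵢ* vᵢ = C x` and `vᵢ ∈ Aᵢ(Lᵢ x)` for every `i`, i.e. iff `𝐯 ∈ 𝓓₁`. -/
theorem product_space_dual_reformulation
    {H : Type*} [NormedAddCommGroup H] [InnerProductSpace ℝ H] [CompleteSpace H]
    (m : ℕ) (hm : 1 ≤ m)
    (w : Fin m → ℝ) (hw : ∀ i, w i ∈ Set.Icc (0 : ℝ) 1) (hwsum : ∑ i, w i = 1)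
    (C : H → H)
    (G : Fin m → Type*) [∀ i, NormedAddCommGroup (G i)] [∀ i, InnerProductSpace ℝ (G i)]
    [∀ i, CompleteSpace (G i)]
    (A : ∀ i, G i → Set (G i)) (L : ∀ i, H →L[ℝ] G i)
    (v : ∀ i, G i) :
    (∃ (x : Fin m → H) (z : Fin m → H),
        (∀ i j, x i = x j) ∧                             -- 𝐱 ∈ 𝐕
        (∑ i, w i • z i = 0) ∧                           -- 𝐰 ∈ 𝐕^⊥, so −𝐋*𝐯 ∈ N_𝐕𝐱 + 𝐂𝐱
        (∀ i, -((L i).adjoint (v i)) = z i + C (x i)) ∧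
        (∀ i, v i ∈ A i (L i (x i)))) ↔                  -- 𝐋𝐱 ∈ 𝐀⁻¹𝐯
    (∃ x : H, -(∑ i, w i • (L i).adjoint (v i)) = C x ∧ ∀ i, v i ∈ A i (L i x)) :=
  product_space_dual_reformulation_general m hm w hwsum C G A L v
end
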